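/- arXiv:1904.07273 — 2 statements merged into one kernel-verified Lean document; each statement's English description precedes it below -/
import Mathlib

section
/- (Lemma 1) Let W_A and W_1, …, W_l be subspaces of V. Partition the index set {1,…,l} into disjoint groups R_1, …, R_t each of size r together with a remainder set R' of size strictly less than r. Assume: (L3) for all disjoint subsets B_1, B_2 ⊆ {1,…,l}, I(W_A ; W_{B_1} | W_{B_2}) = I(W_A ; W_{B_1}); and (L2) I(W_A ; W_{R'}) = 0. Then dim(W_A ⊓ Σ_{i=1}^l W_i) computed as mutual information decomposes group-wise: I(W_A ; W_{{1,…,l}}) = Σ_{j=1}^t I(W_A ; W_{R_j}). -/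
/-- Mutual information of two subspaces: `I(A;B) = dim A + dim B − dim(A+B)`. -/
noncomputable def mi (F : Type*) {V : Type*} [Field F] [AddCommGroup V] [Module F V]
    (A B : Submodule F V) : ℤ :=
  (Module.finrank F A : ℤ) + Module.finrank F B - Module.finrank F (A ⊔ B : Submodule F V)

/-- Conditional mutual information of subspaces:
`I(A;B|C) = dim(A+C) + dim(B+C) − dim(A+B+C) − dim C`. -/
noncomputable def cmi (F : Type*) {V : Type*} [Field F] [AddCommGroup V] [Module F V]
    (A B C : Submodule F V) : ℤ :=
  (Module.finrank F (A ⊔ C : Submodule F V) : ℤ) + Module.finrank F (B ⊔ C : Submodule F V)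
    - Module.finrank F (A ⊔ B ⊔ C : Submodule F V) - Module.finrank F C

theorem mi_sup_eq_mi_add_cmi (F : Type*) {V : Type*} [Field F] [AddCommGroup V] [Module F V]
    (A B C : Submodule F V) : mi F A (B ⊔ C) = mi F A C + cmi F A B C := by
  rw [mi, mi, cmi, ← sup_assoc]
  ring

/-- Peeling off one group at a time with the chain rule, (L3) turns each conditional term into
an unconditional one. -/
theorem mi_sup_biUnion_union_eq {F V ι κ : Type*} [Field F] [AddCommGroup V] [Module F V]
    [DecidableEq ι] [DecidableEq κ] (A : Submodule F V) (W : ι → Submodule F V)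
    (R : κ → Finset ι) (R' : Finset ι) (s : Finset κ)
    (hdisj : (s : Set κ).PairwiseDisjoint R) (hdisj' : ∀ j ∈ s, Disjoint (R j) R')
    (hL3 : ∀ B₁ B₂ : Finset ι, Disjoint B₁ B₂ →
      cmi F A (B₁.sup W) (B₂.sup W) = mi F A (B₁.sup W)) :
    mi F A ((s.biUnion R ∪ R').sup W) = mi F A (R'.sup W) + ∑ j ∈ s, mi F A ((R j).sup W) := by
  induction s using Finset.induction_on with
  | empty => simp
  | @insert j s hj ih =>
    have hdisj_s : (s : Set κ).PairwiseDisjoint R :=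
      hdisj.subset (by simp [Set.subset_insert])
    have hRj : Disjoint (R j) (s.biUnion R ∪ R') := by
      refine Finset.disjoint_union_right.mpr ⟨(Finset.disjoint_biUnion_right _ _ _).mpr ?_, ?_⟩
      · intro j' hj'
        exact hdisj (by simp) (by simp [hj']) (ne_of_mem_of_not_mem hj' hj).symm
      · exact hdisj' j (Finset.mem_insert_self j s)
    have hunion : (insert j s).biUnion R ∪ R' = R j ∪ (s.biUnion R ∪ R') := by
      rw [Finset.biUnion_insert, Finset.union_assoc]
    rw [hunion, Finset.sup_union, mi_sup_eq_mi_add_cmi, hL3 _ _ hRj,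
      ih hdisj_s (fun j' hj' => hdisj' j' (Finset.mem_insert_of_mem hj')), Finset.sum_insert hj]
    ring

theorem lemma1_groupwise_decomposition_general
    (F V : Type*) [Field F] [AddCommGroup V] [Module F V]
    (l t : ℕ) (WA : Submodule F V) (W : Fin l → Submodule F V)
    (R : Fin t → Finset (Fin l)) (R' : Finset (Fin l))
    (hdisj : ∀ j j' : Fin t, j ≠ j' → Disjoint (R j) (R j'))
    (hdisj' : ∀ j : Fin t, Disjoint (R j) R')
    (hcover : Finset.univ.biUnion R ∪ R' = (Finset.univ : Finset (Fin l)))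
    (hL3 : ∀ B₁ B₂ : Finset (Fin l), Disjoint B₁ B₂ →
      cmi F WA (B₁.sup W) (B₂.sup W) = mi F WA (B₁.sup W))
    (hL2 : mi F WA (R'.sup W) = 0) :
    mi F WA ((Finset.univ : Finset (Fin l)).sup W)
      = ∑ j : Fin t, mi F WA ((R j).sup W) := by
  have h := mi_sup_biUnion_union_eq WA W R R' Finset.univ
    (fun j _ j' _ hne => hdisj j j' hne) (fun j _ => hdisj' j) hL3
  rwa [hcover, hL2, zero_add] at h

/-- Lemma 1: Under (L3) and (L2), the mutual information of a
node subspace with the sum of `l` other node subspaces decomposes group-wise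
over a partition into groups of size `r` plus a remainder of size `< r`:
`I(W_A ; W_{{1,…,l}}) = Σ_{j=1}^t I(W_A ; W_{R_j})`. -/
theorem lemma1_groupwise_decomposition
    (F V : Type*) [Field F] [AddCommGroup V] [Module F V] [FiniteDimensional F V]
    (l t r : ℕ) (WA : Submodule F V) (W : Fin l → Submodule F V)
    (R : Fin t → Finset (Fin l)) (R' : Finset (Fin l))
    (hcard : ∀ j : Fin t, (R j).card = r) (hcard' : R'.card < r)
    (hdisj : ∀ j j' : Fin t, j ≠ j' → Disjoint (R j) (R j'))
    (hdisj' : ∀ j : Fin t, Disjoint (R j) R')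
    (hcover : Finset.univ.biUnion R ∪ R' = (Finset.univ : Finset (Fin l)))
    (hL3 : ∀ B₁ B₂ : Finset (Fin l), Disjoint B₁ B₂ →
      cmi F WA (B₁.sup W) (B₂.sup W) = mi F WA (B₁.sup W))
    (hL2 : mi F WA (R'.sup W) = 0) :
    mi F WA ((Finset.univ : Finset (Fin l)).sup W)
      = ∑ j : Fin t, mi F WA ((R j).sup W) :=
  lemma1_groupwise_decomposition_general F V l t WA W R R' hdisj hdisj' hcover hL3 hL2
end

section
/- (Theorem 3, abstract form, interior point with d = n − r and per-node storage α = n − 2r) Let n, r, k be positive integers with r dividing k, k ≤ n − r and 2r ≤ n, and set α := n − 2r. Let W_1, …, W_k be subspaces of V with dim W_i = α for every i. Assume: (modified L2) for every i and every S ⊆ {1,…,k}\{i} with |S| ≤ 2r−1, I(W_i ; W_S) = 0; (modified L3) for every i and all pairwise disjoint subsets B_1, B_2, B_3 ⊆ {1,…,k}\{i} with |B_3| = r, I(W_i ; W_{B_1} | W_{B_2} + W_{B_3}) = I(W_i ; W_{B_1} | W_{B_3}); (modified L4) for every i and all disjoint subsets R, R' ⊆ {1,…,k}\{i} each of size r,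 I(W_i ; W_R | W_{R'}) ≤ r. Then 2 · dim(Σ_{i=1}^k W_i) ≥ k(2(n − 2r) − (k − r)) + 2r(k − r). -/
/-!
Adding the `W_i` one at a time, `dim W_{[k]} = k α − Σ_v I(W_v ; W_{<v})`, so it suffices to bound
each term. Split the `v` predecessors of `W_v` into one block `R` of size `r` and the rest `A`:
`I(W_v ; W_A + W_R) = I(W_v ; W_R) + I(W_v ; W_A | W_R)`, where the first term vanishes by (L2).
Peeling `r`-blocks `D` off `A` one at a time, (L3) turns `I(W_v ; W_D | W_{A∖D} + W_R)` into
`I(W_v ; W_D | W_R)`, which (L4) bounds by `r`; once fewer than `r` elements are left, (L2) kills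
what remains. Hence `I(W_v ; W_{<v}) ≤ r (⌊v/r⌋ − 1)`, and summing over `v < k = r q` gives
`r² (q − 1)(q − 2) / 2 = (k − r)(k − 2r) / 2`.
-/

section InformationIdentities

variable {F V : Type*} [Field F] [AddCommGroup V] [Module F V]

theorem finrank_sup_eq (A B : Submodule F V) :
    (Module.finrank F (A ⊔ B : Submodule F V) : ℤ)
      = Module.finrank F A + Module.finrank F B - mi F A B := by
  unfold mi; ring

theorem mi_sup_right (A B C : Submodule F V) :
    mi F A (B ⊔ C) = mi F A C + cmi F A B C := by
  unfold mi cmi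
  rw [show A ⊔ (B ⊔ C) = A ⊔ B ⊔ C by ac_rfl]
  ring

theorem cmi_sup_right (A X Y C : Submodule F V) :
    cmi F A (X ⊔ Y) C = cmi F A X C + cmi F A Y (X ⊔ C) := by
  unfold cmi
  rw [show A ⊔ (X ⊔ Y) ⊔ C = A ⊔ Y ⊔ (X ⊔ C) by ac_rfl,
    show X ⊔ Y ⊔ C = Y ⊔ (X ⊔ C) by ac_rfl, show A ⊔ X ⊔ C = A ⊔ (X ⊔ C) by ac_rfl]
  ring

theorem finrank_finset_sup_eq_sum {ι : Type*} [LinearOrder ι] (W : ι → Submodule F V)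
    (s : Finset ι) :
    (Module.finrank F (s.sup W : Submodule F V) : ℤ)
      = ∑ i ∈ s, ((Module.finrank F (W i) : ℤ) - mi F (W i) ({j ∈ s | j < i}.sup W)) := by
  induction s using Finset.induction_on_max with
  | empty =>
    rw [Finset.sup_empty, finrank_bot, Finset.sum_empty, Nat.cast_zero]
  | insert a s hlt ih =>
    have ha : a ∉ s := fun h => lt_irrefl a (hlt a h)
    have hfilter_a : {j ∈ insert a s | j < a} = s := by
      rw [Finset.filter_insert, if_neg (lt_irrefl a), Finset.filter_true_of_mem hlt]
    have hfilter : ∀ i ∈ s, {j ∈ insert a s | j < i} = {j ∈ s | j < i} := fun i hi => by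
      rw [Finset.filter_insert, if_neg (hlt i hi).asymm]
    rw [Finset.sum_insert ha, hfilter_a, Finset.sum_congr rfl fun i hi => by rw [hfilter i hi],
      ← ih, Finset.sup_insert, finrank_sup_eq]
    ring

theorem card_mul_sub_sum_le_finrank_sup {ι : Type*} [LinearOrder ι] [Fintype ι]
    (W : ι → Submodule F V) {α : ℕ} (hdim : ∀ i, Module.finrank F (W i) = α) {b : ι → ℤ}
    (hmi : ∀ i, mi F (W i) (({j | j < i} : Finset ι).sup W) ≤ b i) :
    Fintype.card ι * (α : ℤ) - ∑ i, b i
      ≤ Module.finrank F ((Finset.univ : Finset ι).sup W : Submodule F V) := by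
  rw [finrank_finset_sup_eq_sum, ← Finset.card_univ, ← nsmul_eq_mul, ← Finset.sum_const,
    ← Finset.sum_sub_distrib]
  exact Finset.sum_le_sum fun i _ => by rw [hdim]; exact sub_le_sub_left (hmi i) _

end InformationIdentities

section ModifiedConditions

variable (F : Type*) {V ι : Type*} [Field F] [AddCommGroup V] [Module F V]

def ModifiedL2 (W : ι → Submodule F V) (r : ℕ) : Prop :=
  ∀ (i : ι) (S : Finset ι), i ∉ S → S.card ≤ 2 * r - 1 → mi F (W i) (S.sup W) = 0

def ModifiedL3 (W : ι → Submodule F V) (r : ℕ) : Prop :=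
  ∀ (i : ι) (B₁ B₂ B₃ : Finset ι), i ∉ B₁ → i ∉ B₂ → i ∉ B₃ →
    Disjoint B₁ B₂ → Disjoint B₁ B₃ → Disjoint B₂ B₃ → B₃.card = r →
    cmi F (W i) (B₁.sup W) (B₂.sup W ⊔ B₃.sup W) = cmi F (W i) (B₁.sup W) (B₃.sup W)

def ModifiedL4 (W : ι → Submodule F V) (r : ℕ) : Prop :=
  ∀ (i : ι) (S S' : Finset ι), i ∉ S → i ∉ S' → Disjoint S S' →
    S.card = r → S'.card = r → cmi F (W i) (S.sup W) (S'.sup W) ≤ (r : ℤ)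

variable {F} [DecidableEq ι] {W : ι → Submodule F V} {r : ℕ}

theorem ModifiedL2.cmi_eq_zero (hL2 : ModifiedL2 F W r) {i : ι} {A R : Finset ι}
    (hiA : i ∉ A) (hiR : i ∉ R) (hAR : Disjoint A R) (hA : A.card < r) (hR : R.card = r) :
    cmi F (W i) (A.sup W) (R.sup W) = 0 := by
  have hAR_card : (A ∪ R).card ≤ 2 * r - 1 := by
    rw [Finset.card_union_of_disjoint hAR]; omega
  have hmi_union := hL2 i (A ∪ R) (by simp [hiA, hiR]) hAR_card
  have hmi_R := hL2 i R hiR (by omega)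
  rw [Finset.sup_union, mi_sup_right, hmi_R] at hmi_union
  simpa using hmi_union

theorem cmi_finset_sup_le (hr : 0 < r) (hL2 : ModifiedL2 F W r) (hL3 : ModifiedL3 F W r)
    (hL4 : ModifiedL4 F W r) {i : ι} {R : Finset ι} (hiR : i ∉ R) (hR : R.card = r)
    (A : Finset ι) (hiA : i ∉ A) (hAR : Disjoint A R) :
    cmi F (W i) (A.sup W) (R.sup W) ≤ r * (A.card / r : ℕ) := by
  induction A using Finset.strongInduction with
  | H A ih =>
  by_cases hA : A.card < r
  · rw [hL2.cmi_eq_zero hiA hiR hAR hA hR]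
    positivity
  obtain ⟨D, hDA, hD⟩ := Finset.exists_subset_card_eq (not_lt.1 hA)
  have hiD : i ∉ D := fun h => hiA (hDA h)
  have hiAD : i ∉ A \ D := fun h => hiA (Finset.sdiff_subset h)
  have hDR : Disjoint D R := hAR.mono_left hDA
  have hADR : Disjoint (A \ D) R := hAR.mono_left Finset.sdiff_subset
  have hrest := ih (A \ D) (Finset.sdiff_ssubset hDA (Finset.card_pos.1 (by omega))) hiAD hADR
  have hblock : cmi F (W i) (D.sup W) ((A \ D).sup W ⊔ R.sup W) ≤ r := by
    rw [hL3 i D (A \ D) R hiD hiAD hiR Finset.disjoint_sdiff hDR hADR hR]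
    exact hL4 i D R hiD hiR hDR hD hR
  have hcard : A.card / r = (A \ D).card / r + 1 := by
    rw [Finset.card_sdiff_of_subset hDA, hD, Nat.div_eq_sub_div hr (not_lt.1 hA)]
  rw [← Finset.sdiff_union_of_subset hDA, Finset.sup_union, cmi_sup_right,
    Finset.sdiff_union_of_subset hDA, hcard, Nat.cast_add_one, mul_add_one]
  exact add_le_add hrest hblock

theorem mi_finset_sup_le (hr : 0 < r) (hL2 : ModifiedL2 F W r) (hL3 : ModifiedL3 F W r)
    (hL4 : ModifiedL4 F W r) {i : ι} {S : Finset ι} (hiS : i ∉ S) :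
    mi F (W i) (S.sup W) ≤ r * (S.card / r - 1 : ℕ) := by
  by_cases hS : S.card < r
  · rw [hL2 i S hiS (by omega)]
    positivity
  obtain ⟨R, hRS, hR⟩ := Finset.exists_subset_card_eq (not_lt.1 hS)
  have hiR : i ∉ R := fun h => hiS (hRS h)
  have hrest := cmi_finset_sup_le hr hL2 hL3 hL4 hiR hR (S \ R)
    (fun h => hiS (Finset.sdiff_subset h)) Finset.sdiff_disjoint
  rw [← Finset.sdiff_union_of_subset hRS, Finset.sup_union, mi_sup_right,
    hL2 i R hiR (by omega), zero_add]
  have hcard : (S \ R).card / r = S.card / r - 1 := by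
    rw [Finset.card_sdiff_of_subset hRS, hR, Nat.div_eq_sub_div hr (not_lt.1 hS),
      Nat.add_sub_cancel]
  rwa [Finset.sdiff_union_of_subset hRS, ← hcard]

end ModifiedConditions

theorem sum_range_mul_div {M : Type*} [AddCommMonoid M] (f : ℕ → M) {r : ℕ} (hr : 0 < r)
    (q : ℕ) : ∑ v ∈ Finset.range (r * q), f (v / r) = r • ∑ j ∈ Finset.range q, f j := by
  induction q with
  | zero => simp
  | succ q ih =>
    have hblock : ∀ x ∈ Finset.range r, f ((r * q + x) / r) = f q := fun x hx => by
      rw [Nat.mul_add_div hr, Nat.div_eq_of_lt (Finset.mem_range.1 hx), add_zero]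
    rw [mul_add_one, Finset.sum_range_add, ih, Finset.sum_congr rfl hblock, Finset.sum_const,
      Finset.card_range, Finset.sum_range_succ, smul_add]

theorem two_mul_sum_range_mul_div_sub_one {r : ℕ} (hr : 0 < r) (m : ℕ) :
    2 * ∑ v ∈ Finset.range (r * (m + 1)), ((r * (v / r - 1) : ℕ) : ℤ) = r * r * (m * (m - 1)) := by
  have hgauss : ∑ j ∈ Finset.range (m + 1), (j - 1) = ∑ j ∈ Finset.range m, j := by
    simp [Finset.sum_range_succ']
  have hnat : 2 * ∑ v ∈ Finset.range (r * (m + 1)), r * (v / r - 1) = r * r * (m * (m - 1)) := by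
    rw [sum_range_mul_div (fun j => r * (j - 1)) hr, smul_eq_mul, ← Finset.mul_sum, hgauss,
      ← Finset.sum_range_id_mul_two]
    ring
  have hcast : ((m * (m - 1) : ℕ) : ℤ) = m * (m - 1) := by
    rcases m with _ | m <;> simp
  rw [← Nat.cast_sum, ← hcast]
  exact_mod_cast hnat

theorem theorem3_interior_point_bound_general
    (F V : Type*) [Field F] [AddCommGroup V] [Module F V]
    (n r k : ℕ) (hr : 0 < r) (hk : 0 < k)
    (hrk : r ∣ k) (h2rn : 2 * r ≤ n)
    (α : ℕ) (hα : α = n - 2 * r)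
    (W : Fin k → Submodule F V)
    (hdim : ∀ i : Fin k, Module.finrank F (W i) = α)
    (hL2 : ∀ (i : Fin k) (S : Finset (Fin k)), i ∉ S → S.card ≤ 2 * r - 1 →
      mi F (W i) (S.sup W) = 0)
    (hL3 : ∀ (i : Fin k) (B₁ B₂ B₃ : Finset (Fin k)), i ∉ B₁ → i ∉ B₂ → i ∉ B₃ →
      Disjoint B₁ B₂ → Disjoint B₁ B₃ → Disjoint B₂ B₃ → B₃.card = r →
      cmi F (W i) (B₁.sup W) (B₂.sup W ⊔ B₃.sup W)
        = cmi F (W i) (B₁.sup W) (B₃.sup W))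
    (hL4 : ∀ (i : Fin k) (S S' : Finset (Fin k)), i ∉ S → i ∉ S' → Disjoint S S' →
      S.card = r → S'.card = r → cmi F (W i) (S.sup W) (S'.sup W) ≤ (r : ℤ)) :
    2 * (Module.finrank F ((Finset.univ : Finset (Fin k)).sup W : Submodule F V) : ℤ)
      ≥ (k : ℤ) * (2 * ((n : ℤ) - 2 * r) - ((k : ℤ) - r)) + 2 * r * ((k : ℤ) - r) := by
  obtain ⟨q, rfl⟩ := hrk
  obtain ⟨m, rfl⟩ : ∃ m, q = m + 1 := Nat.exists_eq_add_one.2 (Nat.pos_of_mul_pos_left hk)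
  have hterm (i : Fin (r * (m + 1))) :
      mi F (W i) (({j | j < i} : Finset _).sup W) ≤ ((r * (i / r - 1) : ℕ) : ℤ) := by
    rw [Finset.filter_gt_eq_Iio, ← Fin.card_Iio]
    exact mi_finset_sup_le hr hL2 hL3 hL4 Finset.notMem_Iio_self
  have hdim_ge := card_mul_sub_sum_le_finrank_sup W hdim hterm
  rw [Fintype.card_fin, Fin.sum_univ_eq_sum_range (fun v => ((r * (v / r - 1) : ℕ) : ℤ)),
    hα, Nat.cast_sub h2rn] at hdim_ge
  have hsum := two_mul_sum_range_mul_div_sub_one hr m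
  push_cast at hsum hdim_ge ⊢
  linarith

/-- Theorem 3, abstract form; interior point with `d = n − r`
and per-node storage `α = n − 2r`: under modified (L2), (L3), (L4),
`2 · dim(Σ_{i=1}^k W_i) ≥ k(2(n − 2r) − (k − r)) + 2r(k − r)`. -/
theorem theorem3_interior_point_bound
    (F V : Type*) [Field F] [AddCommGroup V] [Module F V] [FiniteDimensional F V]
    (n r k : ℕ) (hn : 0 < n) (hr : 0 < r) (hk : 0 < k)
    (hrk : r ∣ k) (hkn : k ≤ n - r) (h2rn : 2 * r ≤ n)
    (α : ℕ) (hα : α = n - 2 * r)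
    (W : Fin k → Submodule F V)
    (hdim : ∀ i : Fin k, Module.finrank F (W i) = α)
    (hL2 : ∀ (i : Fin k) (S : Finset (Fin k)), i ∉ S → S.card ≤ 2 * r - 1 →
      mi F (W i) (S.sup W) = 0)
    (hL3 : ∀ (i : Fin k) (B₁ B₂ B₃ : Finset (Fin k)), i ∉ B₁ → i ∉ B₂ → i ∉ B₃ →
      Disjoint B₁ B₂ → Disjoint B₁ B₃ → Disjoint B₂ B₃ → B₃.card = r →
      cmi F (W i) (B₁.sup W) (B₂.sup W ⊔ B₃.sup W)
        = cmi F (W i) (B₁.sup W) (B₃.sup W))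
    (hL4 : ∀ (i : Fin k) (S S' : Finset (Fin k)), i ∉ S → i ∉ S' → Disjoint S S' →
      S.card = r → S'.card = r → cmi F (W i) (S.sup W) (S'.sup W) ≤ (r : ℤ)) :
    2 * (Module.finrank F ((Finset.univ : Finset (Fin k)).sup W : Submodule F V) : ℤ)
      ≥ (k : ℤ) * (2 * ((n : ℤ) - 2 * r) - ((k : ℤ) - r)) + 2 * r * ((k : ℤ) - r) :=
  theorem3_interior_point_bound_general F V n r k hr hk hrk h2rn α hα W hdim hL2 hL3 hL4
end
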